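/- Let h > 0 and k ∈ ℝ, let H^{fd5}_{h/2} be the standard 5-point Helmholtz operator with grid spacing h/2, R the full-weighting restriction and P = 4Rᵀ the bilinear-interpolation prolongation. Then for every ξ = (ξ₁, ξ₂) ∈ ℝ², the coarse-grid plane wave v_{I,J} = exp(i h (ξ₁ I + ξ₂ J)) satisfies (R (H^{fd5}_{h/2} (P v)))_{I,J} = σ^{gal}_h(ξ) · v_{I,J} for all (I,J) ∈ ℤ², where σ^{gal}_h(ξ) = 3h^{-2} − (9/16)k² + (−h^{-2} − (3/16)k²)(cos(ξ₁h) + cos(ξ₂h)) + (−(1/2)h^{-2} − (1/32)k²)(cos((ξ₁+ξ₂)h) + cos((ξ₁−ξ₂)h)). -/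

import Mathlib

/-- The standard 5-point finite difference Helmholtz operator in 2-D. -/
noncomputable def Hfd5 (h k : ℝ) (u : ℤ → ℤ → ℂ) (i j : ℤ) : ℂ :=
  (h : ℂ) ^ (-2 : ℤ) *
      (4 * u i j - u (i - 1) j - u (i + 1) j - u i (j - 1) - u i (j + 1)) -
    (k : ℂ) ^ 2 * u i j

/-- The full-weighting restriction operator. -/
noncomputable def fwRestrict (u : ℤ → ℤ → ℂ) (I J : ℤ) : ℂ :=
  (1 / 16 : ℂ) *
    (4 * u (2 * I) (2 * J) +
      2 * (u (2 * I - 1) (2 * J) + u (2 * I + 1) (2 * J) +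
           u (2 * I) (2 * J - 1) + u (2 * I) (2 * J + 1)) +
      u (2 * I - 1) (2 * J - 1) + u (2 * I + 1) (2 * J - 1) +
      u (2 * I - 1) (2 * J + 1) + u (2 * I + 1) (2 * J + 1))

/-- Symbol of the Galerkin coarse-grid operator built from the 5-point scheme
with full weighting restriction and bilinear prolongation. -/
noncomputable def sigmaGal (h k ξ₁ ξ₂ : ℝ) : ℝ :=
  3 * h ^ (-2 : ℤ) - 9 / 16 * k ^ 2 +
    (-h ^ (-2 : ℤ) - 3 / 16 * k ^ 2) * (Real.cos (ξ₁ * h) + Real.cos (ξ₂ * h)) +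
    (-(1 / 2) * h ^ (-2 : ℤ) - 1 / 32 * k ^ 2) *
      (Real.cos ((ξ₁ + ξ₂) * h) + Real.cos ((ξ₁ - ξ₂) * h))

/-! Expanding `R (H_{h/2} (P v))` at a coarse node leaves a translation-invariant 9-point stencil
on `v` whose coefficients do not depend on `v` (`galerkinStencil`). A plane wave is an
eigenfunction of every such stencil: each pair of opposite neighbours contributes
`2 cos((ξ₁ a + ξ₂ b) h)` times the central value, which is why the stencil coefficients are half
the cosine coefficients of `sigmaGal`. -/

noncomputable def planeWave (h ξ₁ ξ₂ : ℝ) (I J : ℤ) : ℂ :=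
  Complex.exp (Complex.I * (h : ℂ) * ((ξ₁ : ℂ) * (I : ℂ) + (ξ₂ : ℂ) * (J : ℂ)))

lemma planeWave_add (h ξ₁ ξ₂ : ℝ) (I J a b : ℤ) :
    planeWave h ξ₁ ξ₂ (I + a) (J + b) =
      Complex.exp (Complex.I * (h : ℂ) * ((ξ₁ : ℂ) * (a : ℂ) + (ξ₂ : ℂ) * (b : ℂ))) *
        planeWave h ξ₁ ξ₂ I J := by
  rw [planeWave, planeWave, ← Complex.exp_add]
  push_cast
  ring_nf

lemma planeWave_add_add_sub_sub (h ξ₁ ξ₂ : ℝ) (I J a b : ℤ) :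
    planeWave h ξ₁ ξ₂ (I + a) (J + b) + planeWave h ξ₁ ξ₂ (I - a) (J - b) =
      2 * (Real.cos ((ξ₁ * a + ξ₂ * b) * h) : ℂ) * planeWave h ξ₁ ξ₂ I J := by
  rw [sub_eq_add_neg I, sub_eq_add_neg J, planeWave_add, planeWave_add, Complex.ofReal_cos,
    Complex.two_cos, ← add_mul]
  push_cast
  ring_nf

noncomputable def galerkinStencil (h k : ℝ) (v : ℤ → ℤ → ℂ) (I J : ℤ) : ℂ :=
  (3 * (h : ℂ) ^ (-2 : ℤ) - 9 / 16 * (k : ℂ) ^ 2) * v I J +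
    (-(1 / 2) * (h : ℂ) ^ (-2 : ℤ) - 3 / 32 * (k : ℂ) ^ 2) *
      (v (I + 1) J + v (I - 1) J + v I (J + 1) + v I (J - 1)) +
    (-(1 / 4) * (h : ℂ) ^ (-2 : ℤ) - 1 / 64 * (k : ℂ) ^ 2) *
      (v (I + 1) (J + 1) + v (I - 1) (J - 1) + v (I + 1) (J - 1) + v (I - 1) (J + 1))

lemma fwRestrict_Hfd5_half_eq_galerkinStencil (h k : ℝ) (v Pv : ℤ → ℤ → ℂ)
    (hP00 : ∀ I J : ℤ, Pv (2 * I) (2 * J) = v I J)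
    (hP10 : ∀ I J : ℤ, Pv (2 * I + 1) (2 * J) = (1 / 2) * (v I J + v (I + 1) J))
    (hP01 : ∀ I J : ℤ, Pv (2 * I) (2 * J + 1) = (1 / 2) * (v I J + v I (J + 1)))
    (hP11 : ∀ I J : ℤ, Pv (2 * I + 1) (2 * J + 1) =
      (1 / 4) * (v I J + v (I + 1) J + v I (J + 1) + v (I + 1) (J + 1)))
    (I J : ℤ) :
    fwRestrict (Hfd5 (h / 2) k Pv) I J = galerkinStencil h k v I J := by
  have fine_index (N : ℤ) : 2 * N - 1 - 1 = 2 * (N - 1) ∧ 2 * N - 1 + 1 = 2 * N ∧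
      2 * N + 1 - 1 = 2 * N ∧ 2 * N + 1 + 1 = 2 * (N + 1) ∧ 2 * N - 1 = 2 * (N - 1) + 1 := by
    omega
  have half_sq : ((h : ℂ) / 2) ^ (-2 : ℤ) = 4 * (h : ℂ) ^ (-2 : ℤ) := by
    rw [div_zpow, zpow_neg (2 : ℂ)]
    norm_num [div_eq_mul_inv]
    ring
  obtain ⟨xI₁, xI₂, xI₃, xI₄, xI₅⟩ := fine_index I
  obtain ⟨xJ₁, xJ₂, xJ₃, xJ₄, xJ₅⟩ := fine_index J
  simp only [fwRestrict, Hfd5, xI₁, xI₂, xI₃, xI₄, xJ₁, xJ₂, xJ₃, xJ₄]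
  simp only [xI₅, xJ₅, hP00, hP10, hP01, hP11, sub_add_cancel, galerkinStencil]
  push_cast
  rw [half_sq]
  ring

lemma galerkinStencil_planeWave (h k ξ₁ ξ₂ : ℝ) (I J : ℤ) :
    galerkinStencil h k (planeWave h ξ₁ ξ₂) I J =
      (sigmaGal h k ξ₁ ξ₂ : ℂ) * planeWave h ξ₁ ξ₂ I J := by
  have axisX := planeWave_add_add_sub_sub h ξ₁ ξ₂ I J 1 0
  have axisY := planeWave_add_add_sub_sub h ξ₁ ξ₂ I J 0 1
  have diagSum := planeWave_add_add_sub_sub h ξ₁ ξ₂ I J 1 1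
  have diagDiff := planeWave_add_add_sub_sub h ξ₁ ξ₂ I J 1 (-1)
  simp only [add_zero, sub_zero, Int.cast_one, Int.cast_zero, Int.cast_neg, mul_one, mul_zero,
    mul_neg, zero_add, ← sub_eq_add_neg, sub_neg_eq_add] at axisX axisY diagSum diagDiff
  rw [galerkinStencil, sigmaGal]
  push_cast at axisX axisY diagSum diagDiff ⊢
  linear_combination
    (-(1 / 2) * (h : ℂ) ^ (-2 : ℤ) - 3 / 32 * (k : ℂ) ^ 2) * (axisX + axisY) +
    (-(1 / 4) * (h : ℂ) ^ (-2 : ℤ) - 1 / 64 * (k : ℂ) ^ 2) * (diagSum + diagDiff)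

theorem stmt5_general (h k : ℝ) (ξ₁ ξ₂ : ℝ)
    (v : ℤ → ℤ → ℂ)
    (hv : ∀ I J : ℤ,
      v I J = Complex.exp (Complex.I * (h : ℂ) * ((ξ₁ : ℂ) * (I : ℂ) + (ξ₂ : ℂ) * (J : ℂ))))
    (Pv : ℤ → ℤ → ℂ)
    (hP00 : ∀ I J : ℤ, Pv (2 * I) (2 * J) = v I J)
    (hP10 : ∀ I J : ℤ, Pv (2 * I + 1) (2 * J) = (1 / 2) * (v I J + v (I + 1) J))
    (hP01 : ∀ I J : ℤ, Pv (2 * I) (2 * J + 1) = (1 / 2) * (v I J + v I (J + 1)))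
    (hP11 : ∀ I J : ℤ, Pv (2 * I + 1) (2 * J + 1) =
      (1 / 4) * (v I J + v (I + 1) J + v I (J + 1) + v (I + 1) (J + 1))) :
    ∀ I J : ℤ,
      fwRestrict (Hfd5 (h / 2) k Pv) I J = (sigmaGal h k ξ₁ ξ₂ : ℂ) * v I J := by
  obtain rfl : v = planeWave h ξ₁ ξ₂ := funext₂ hv
  intro I J
  rw [fwRestrict_Hfd5_half_eq_galerkinStencil h k _ Pv hP00 hP10 hP01 hP11 I J,
    galerkinStencil_planeWave]

/-- the Galerkin coarse operator `R ∘ H^{fd5}_{h/2} ∘ P` has the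
coarse plane waves as eigenfunctions, with eigenvalue `sigmaGal h k ξ₁ ξ₂`. -/
theorem stmt5 (h k : ℝ) (hh : 0 < h) (ξ₁ ξ₂ : ℝ)
    (v : ℤ → ℤ → ℂ)
    (hv : ∀ I J : ℤ,
      v I J = Complex.exp (Complex.I * (h : ℂ) * ((ξ₁ : ℂ) * (I : ℂ) + (ξ₂ : ℂ) * (J : ℂ))))
    (Pv : ℤ → ℤ → ℂ)
    (hP00 : ∀ I J : ℤ, Pv (2 * I) (2 * J) = v I J)
    (hP10 : ∀ I J : ℤ, Pv (2 * I + 1) (2 * J) = (1 / 2) * (v I J + v (I + 1) J))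
    (hP01 : ∀ I J : ℤ, Pv (2 * I) (2 * J + 1) = (1 / 2) * (v I J + v I (J + 1)))
    (hP11 : ∀ I J : ℤ, Pv (2 * I + 1) (2 * J + 1) =
      (1 / 4) * (v I J + v (I + 1) J + v I (J + 1) + v (I + 1) (J + 1))) :
    ∀ I J : ℤ,
      fwRestrict (Hfd5 (h / 2) k Pv) I J = (sigmaGal h k ξ₁ ξ₂ : ℂ) * v I J :=
  stmt5_general h k ξ₁ ξ₂ v hv Pv hP00 hP10 hP01 hP11
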